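/- Let ε > 0, δ > 0, set q = (1+ε)^{1/n} and r = (1+δ)^{1/n}, let L₁ > 0 and L₂ be reals, and let K = ⌈log_r L₁⌉. Let k be an integer with k ≥ n such that τ₂′(v_n, q^k, r^K) ≤ L₂ < τ₂′(v_n, q^{k+1}, r^K), let a be the largest nonnegative integer such that τ₂(v_n, a, r^{K−n}) ≤ L₂, and let b be the largest nonnegative integer such that τ₂(v_n, b, r^K) ≤ L₂. Then a ≤ b, a/q^k ≤ 1+ε, and q^k/b ≤ 1+ε. -/

import Mathlib

open scoped BigOperators

/-- `IsWalk src dst u v p` : the list of edges `p` forms a directed walk from `u` to `v`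
in the multigraph whose edges `e` go from `src e` to `dst e`. -/
def IsWalk {V E : Type} (src dst : E → V) : V → V → List E → Prop
  | u, v, [] => u = v
  | u, v, e :: p => src e = u ∧ IsWalk src dst (dst e) v p

/-- `tau2 src dst l l' s v a B` : the smallest threshold `L₂ ∈ ℝ` (as an element of
`ℝ ∪ {−∞, +∞}`) such that at least `a` directed `s`–`v` paths have `l`-weight at most `B`
and `l'`-weight at most `L₂`; it is `−∞` when `a ≤ 0` and `+∞` when fewer than `a`
`s`–`v` paths of `l`-weight at most `B` exist. -/
noncomputable def tau2 {V E : Type} (src dst : E → V) (l l' : E → ℝ) (s v : V)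
    (a B : ℝ) : EReal :=
  sInf {x : EReal | ∃ L₂ : ℝ, x = (L₂ : EReal) ∧
    a ≤ (Nat.card {p : List E // IsWalk src dst s v p ∧
      (p.map l).sum ≤ B ∧ (p.map l').sum ≤ L₂} : ℝ)}

/-!
Write `N(v, B, L)` for the number of `s`–`v` walks of `l`-weight at most `B` and `l'`-weight
at most `L`. Since there are finitely many walks, `N` is right-continuous in `L`, so
`τ₂(v, a, B) ≤ L ↔ a ≤ N(v, B, L)`. Splitting a walk at its last edge gives
`N(v, B, L) = ∑_{e ↦ v} N(src e, B - l e, L - l' e)`, which mirrors the recursion for `τ₂′`.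
Induction along the topological order (vertices numbered from `0`) then shows that `τ₂′`
sandwiches the counts: `τ₂′(v, q^j, r^k) < L` forces `N(v, r^k, L) ≥ q^(j - v)`, because
rounding `j + log_q α_e` down loses at most one factor `q` per edge; and `N(v, r^(k - v), L) ≥ q^j` forces
`τ₂′(v, q^j, r^k) ≤ L`, by choosing `α_e` proportional to the number of walks through `e`,
since rounding the budget down loses at most one factor `r` per edge. At `v_n` the two
bounds are a factor of at most `q^n = 1 + ε` apart.
-/

section Walks

variable {n : ℕ} {E : Type} {src dst : E → Fin n}

theorem IsWalk.val_add_length_le (htopo : ∀ e, src e < dst e) {u v : Fin n} {p : List E}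
    (hp : IsWalk src dst u v p) : (u : ℕ) + p.length ≤ v := by
  induction p generalizing u with
  | nil => cases hp; simp
  | cons e p ih =>
    obtain ⟨rfl, hp⟩ := hp
    have := ih hp
    have := Fin.lt_def.1 (htopo e)
    simp only [List.length_cons]
    omega

theorem isWalk_append_singleton {u v : Fin n} {p : List E} {e : E} :
    IsWalk src dst u v (p ++ [e]) ↔ IsWalk src dst u (src e) p ∧ dst e = v := by
  induction p generalizing u with
  | nil => simp only [List.nil_append, IsWalk]; tauto
  | cons f p ih => simp only [List.cons_append, IsWalk, ih, and_assoc]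

theorem finite_isWalk [Finite E] (htopo : ∀ e, src e < dst e) (u v : Fin n) :
    {p : List E | IsWalk src dst u v p}.Finite :=
  (List.finite_length_le E n).subset fun p hp => by
    have := hp.val_add_length_le htopo
    have := v.isLt
    show p.length ≤ n
    omega

theorem isWalk_self_iff (htopo : ∀ e, src e < dst e) {u : Fin n} {p : List E} :
    IsWalk src dst u u p ↔ p = [] := by
  refine ⟨fun hp => List.eq_nil_of_length_eq_zero ?_, fun h => h ▸ rfl⟩
  have := hp.val_add_length_le htopo
  omega

end Walks

section WalkCount

open Filter Topology

variable {n : ℕ} {E : Type} (src dst : E → Fin n) (l l' : E → ℝ)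

noncomputable def walkCount (s v : Fin n) (B L : ℝ) : ℕ :=
  Nat.card {p : List E // IsWalk src dst s v p ∧ (p.map l).sum ≤ B ∧ (p.map l').sum ≤ L}

variable {src dst}

theorem nonneg_of_walkCount_ne_zero (hl : ∀ e, 0 ≤ l e) {s v : Fin n} {B L : ℝ}
    (h : walkCount src dst l l' s v B L ≠ 0) : 0 ≤ B := by
  obtain ⟨⟨p, -, hB, -⟩⟩ := (Nat.card_ne_zero.1 h).1
  refine (List.sum_nonneg fun x hx => ?_).trans hB
  obtain ⟨e, -, rfl⟩ := List.mem_map.1 hx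
  exact hl e

variable (htopo : ∀ e, src e < dst e)
include htopo

theorem finite_boundedWalks [Finite E] (s v : Fin n) (B L : ℝ) :
    Finite {p : List E // IsWalk src dst s v p ∧ (p.map l).sum ≤ B ∧ (p.map l').sum ≤ L} :=
  ((finite_isWalk htopo s v).subset fun _ hp => hp.1).to_subtype

theorem walkCount_mono [Finite E] (s v : Fin n) {B B' L L' : ℝ} (hB : B ≤ B') (hL : L ≤ L') :
    walkCount src dst l l' s v B L ≤ walkCount src dst l l' s v B' L' :=
  have := finite_boundedWalks l l' htopo s v B' L'
  Nat.card_le_card_of_injective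
    (Subtype.map id fun _ hp => ⟨hp.1, hp.2.1.trans hB, hp.2.2.trans hL⟩)
    (Subtype.map_injective _ Function.injective_id)

theorem walkCount_self (s : Fin n) (B L : ℝ) :
    walkCount src dst l l' s s B L = if 0 ≤ B ∧ 0 ≤ L then 1 else 0 := by
  simp only [walkCount, isWalk_self_iff htopo]
  split_ifs with h
  · have : Unique {p : List E // p = [] ∧ (p.map l).sum ≤ B ∧ (p.map l').sum ≤ L} :=
      { default := ⟨[], rfl, by simpa using h⟩
        uniq := fun p => Subtype.ext p.2.1 }
    exact Nat.card_unique
  · have : IsEmpty {p : List E // p = [] ∧ (p.map l).sum ≤ B ∧ (p.map l').sum ≤ L} :=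
      ⟨fun ⟨_, hp, hB, hL⟩ => h ⟨by simpa [hp] using hB, by simpa [hp] using hL⟩⟩
    exact Nat.card_of_isEmpty

theorem walkCount_eq_sum [Fintype E] {s v : Fin n} (hvs : v ≠ s) (B L : ℝ) :
    walkCount src dst l l' s v B L = ∑ e ∈ Finset.univ.filter (fun e => dst e = v),
      walkCount src dst l l' s (src e) (B - l e) (L - l' e) := by
  have sum_append_singleton (f : E → ℝ) (p : List E) (e : E) :
      ((p ++ [e]).map f).sum = (p.map f).sum + f e := by
    simp only [List.map_append, List.map_cons, List.map_nil, List.sum_append, List.sum_cons,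
      List.sum_nil, add_zero]
  let appendLast : (Σ e : {e : E // dst e = v}, {p : List E // IsWalk src dst s (src e) p ∧
      (p.map l).sum ≤ B - l e ∧ (p.map l').sum ≤ L - l' e}) →
      {p : List E // IsWalk src dst s v p ∧ (p.map l).sum ≤ B ∧ (p.map l').sum ≤ L} :=
    fun x => ⟨x.2.1 ++ [x.1.1], isWalk_append_singleton.2 ⟨x.2.2.1, x.1.2⟩,
      by simp only [sum_append_singleton]; linarith [x.2.2.2.1],
      by simp only [sum_append_singleton]; linarith [x.2.2.2.2]⟩
  have hbij : Function.Bijective appendLast := by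
    refine ⟨fun ⟨e, p, _⟩ ⟨e', p', _⟩ h => ?_, fun ⟨p, hp, hB, hL⟩ => ?_⟩
    · have h : p ++ [e.1] = p' ++ [e'.1] := congrArg Subtype.val h
      obtain ⟨hpp, hee⟩ := List.append_inj' h rfl
      exact Sigma.subtype_ext (Subtype.ext (List.singleton_inj.1 hee)) hpp
    · obtain rfl | ⟨p, e, rfl⟩ := List.eq_nil_or_concat' p
      · exact absurd hp hvs.symm
      obtain ⟨hp, he⟩ := isWalk_append_singleton.1 hp
      simp only [sum_append_singleton] at hB hL
      exact ⟨⟨⟨e, he⟩, p, hp, by linarith, by linarith⟩, rfl⟩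
  have := fun e : {e : E // dst e = v} => finite_boundedWalks l l' htopo s (src e.1)
    (B - l e) (L - l' e)
  rw [walkCount, ← Nat.card_congr (Equiv.ofBijective appendLast hbij), Nat.card_sigma]
  exact (Finset.sum_subtype _ (fun e => by simp)
    fun e => walkCount src dst l l' s (src e) (B - l e) (L - l' e)).symm

theorem walkCount_eventually_le [Finite E] (s v : Fin n) (B L : ℝ) :
    ∀ᶠ L' in 𝓝[>] L, walkCount src dst l l' s v B L' ≤ walkCount src dst l l' s v B L := by
  have hweights : ∀ᶠ L' in 𝓝[>] L, ∀ p ∈ {p : List E | IsWalk src dst s v p},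
      (p.map l').sum ≤ L' → (p.map l').sum ≤ L := by
    refine ((finite_isWalk htopo s v).eventually_all).2 fun p _ => ?_
    rcases le_or_gt (p.map l').sum L with h | h
    · exact Eventually.of_forall fun _ _ => h
    · filter_upwards [Ioo_mem_nhdsGT h] with L' hL' hle using absurd hle (not_le.2 hL'.2)
  filter_upwards [hweights] with L' hL'
  have := finite_boundedWalks l l' htopo s v B L
  exact Nat.card_le_card_of_injective
    (Subtype.map id fun p hp => ⟨hp.1, hp.2.1, hL' p hp.1 hp.2.2⟩)
    (Subtype.map_injective _ Function.injective_id)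

theorem le_walkCount_of_forall_lt [Finite E] {s v : Fin n} {a B L : ℝ}
    (h : ∀ L', L < L' → a ≤ walkCount src dst l l' s v B L') :
    a ≤ walkCount src dst l l' s v B L :=
  let ⟨L', hle, hL'⟩ := ((walkCount_eventually_le l l' htopo s v B L).and self_mem_nhdsWithin).exists
  (h L' hL').trans (by exact_mod_cast hle)

theorem tau2_le_iff [Finite E] {s v : Fin n} {a B L : ℝ} :
    tau2 src dst l l' s v a B ≤ L ↔ a ≤ walkCount src dst l l' s v B L := by
  refine ⟨fun h => le_walkCount_of_forall_lt l l' htopo fun L' hL' => ?_,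
    fun h => sInf_le ⟨L, rfl, h⟩⟩
  obtain ⟨_, ⟨L'', rfl, hL''⟩, hlt⟩ := sInf_lt_iff.1 (h.trans_lt (EReal.coe_lt_coe hL'))
  have hmono := walkCount_mono l l' htopo s v (le_refl B) (EReal.coe_lt_coe_iff.1 hlt).le
  exact hL''.trans (by exact_mod_cast hmono)

end WalkCount

section FloorLogb

open Real

variable {b x : ℝ}

theorem zpow_floor_logb_le (hb : 1 < b) (hx : 0 < x) : b ^ ⌊logb b x⌋ ≤ x :=
  calc b ^ ⌊logb b x⌋ = b ^ (⌊logb b x⌋ : ℝ) := (rpow_intCast b _).symm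
    _ ≤ b ^ logb b x := rpow_le_rpow_of_exponent_le hb.le (Int.floor_le _)
    _ = x := rpow_logb (by linarith) hb.ne' hx

theorem lt_zpow_floor_logb_add_one (hb : 1 < b) (hx : 0 < x) : x < b ^ (⌊logb b x⌋ + 1) :=
  calc x = b ^ logb b x := (rpow_logb (by linarith) hb.ne' hx).symm
    _ < b ^ ((⌊logb b x⌋ + 1 : ℤ) : ℝ) := by
      apply rpow_lt_rpow_of_exponent_lt hb
      push_cast
      exact Int.lt_floor_add_one _
    _ = b ^ (⌊logb b x⌋ + 1) := rpow_intCast b _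

theorem floor_intCast_add_logb (hb : 1 < b) (hx : 0 < x) (j : ℤ) :
    ⌊(j : ℝ) + logb b x⌋ = ⌊logb b (x * b ^ j)⌋ := by
  rw [logb_mul hx.ne' (zpow_ne_zero j (by linarith)), ← rpow_intCast,
    logb_rpow (by linarith) hb.ne', add_comm]

theorem mul_zpow_sub_le_zpow_floor_add_logb (hb : 1 < b) (hx : 0 < x) (j : ℤ) (d : ℕ) :
    x * b ^ (j - d) ≤ b ^ (⌊(j : ℝ) + logb b x⌋ + 1 - d) := by
  have hb0 : 0 < b := by linarith
  have h := lt_zpow_floor_logb_add_one hb (mul_pos hx (zpow_pos hb0 j))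
  rw [← floor_intCast_add_logb hb hx] at h
  rw [zpow_sub₀ hb0.ne', zpow_sub₀ hb0.ne', ← mul_div_assoc]
  gcongr

theorem zpow_sub_sub_le_zpow_floor_logb (hb : 1 < b) {c : ℝ} (hc : 0 ≤ c) {k : ℤ}
    (hpos : 0 < b ^ k - c) (d : ℕ) :
    b ^ (k - d) - c ≤ b ^ (⌊logb b (b ^ k - c)⌋ + 1 - d) := by
  have hb0 : 0 < b := by linarith
  have hbd : 1 ≤ b ^ (d : ℤ) := one_le_zpow₀ hb.le (by positivity)
  calc b ^ (k - d) - c ≤ (b ^ k - c) / b ^ (d : ℤ) := by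
        rw [zpow_sub₀ hb0.ne', sub_div]
        gcongr
        exact div_le_self hc hbd
    _ ≤ b ^ (⌊logb b (b ^ k - c)⌋ + 1) / b ^ (d : ℤ) := by
        gcongr
        exact (lt_zpow_floor_logb_add_one hb hpos).le
    _ = b ^ (⌊logb b (b ^ k - c)⌋ + 1 - d) := (zpow_sub₀ hb0.ne' _ _).symm

end FloorLogb

section Recursion

open Real

variable {n : ℕ} {E : Type} {src dst : E → Fin n} {l l' : E → ℝ} {q r : ℝ}
  {T2 : Fin n → ℝ → ℝ → EReal} {s : Fin n}
  (htopo : ∀ e, src e < dst e) (hq : 1 < q) (hr : 1 < r)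
  (hTs1 : ∀ a x : ℝ, 0 < a → a ≤ 1 → 0 < x → T2 s a x = 0)

include htopo hq hr hTs1 in
theorem zpow_sub_le_walkCount_self_of_tau2'_lt
    (hTs2 : ∀ a x : ℝ, 1 < a → 0 < x → T2 s a x = ⊤) {j k : ℤ} {L : ℝ}
    (hT : T2 s (q ^ j) (r ^ k) < L) :
    q ^ (j - (s : ℕ)) ≤ walkCount src dst l l' s s (r ^ k) L := by
  have hq0 : 0 < q := by linarith
  have hr0 : 0 < r := by linarith
  rcases le_or_gt j 0 with hj | hj
  · rw [hTs1 _ _ (zpow_pos hq0 j) (zpow_le_one_of_nonpos₀ hq.le hj) (zpow_pos hr0 k)] at hT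
    rw [walkCount_self l l' htopo,
      if_pos ⟨(zpow_pos hr0 k).le, (EReal.coe_pos.1 hT).le⟩, Nat.cast_one]
    exact zpow_le_one_of_nonpos₀ hq.le (by omega)
  · rw [hTs2 _ _ (one_lt_zpow₀ hq hj) (zpow_pos hr0 k)] at hT
    exact absurd hT not_top_lt

include htopo hq hr hTs1 in
theorem tau2'_self_le_of_zpow_le_walkCount {j k : ℤ} {B L : ℝ}
    (h : q ^ j ≤ walkCount src dst l l' s s B L) : T2 s (q ^ j) (r ^ k) ≤ L := by
  have hq0 : 0 < q := by linarith
  rw [walkCount_self l l' htopo] at h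
  split_ifs at h with hBL
  · rw [hTs1 _ _ (zpow_pos hq0 j) (by exact_mod_cast h) (zpow_pos (by linarith) k)]
    exact_mod_cast hBL.2
  · exact absurd h (not_le.2 (by simpa using zpow_pos hq0 j))

variable [Fintype E]
  (hTrec : ∀ v : Fin n, v ≠ s → ∀ j k : ℤ,
    T2 v (q ^ j) (r ^ k) = sInf {x : EReal |
      ∃ α : E → ℝ, (∀ e, dst e = v → 0 ≤ α e) ∧
        (∑ e ∈ Finset.univ.filter (fun e => dst e = v), α e) = 1 ∧
        x = (Finset.univ.filter (fun e => dst e = v)).sup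
          (fun e =>
            if α e = 0 then (⊥ : EReal)
            else if r ^ k - l e ≤ 0 then (⊤ : EReal)
            else T2 (src e) (q ^ ⌊(j : ℝ) + Real.logb q (α e)⌋)
              (r ^ ⌊Real.logb r (r ^ k - l e)⌋) + (l' e : EReal))})

include htopo hq hr hTs1 hTrec

theorem zpow_sub_le_walkCount_of_tau2'_lt (hTs2 : ∀ a x : ℝ, 1 < a → 0 < x → T2 s a x = ⊤)
    (v : Fin n) (j k : ℤ) (L : ℝ) (hT : T2 v (q ^ j) (r ^ k) < L) :
    q ^ (j - (v : ℕ)) ≤ walkCount src dst l l' s v (r ^ k) L := by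
  induction v using WellFoundedLT.induction generalizing j k L with
  | ind v ih =>
  by_cases hvs : v = s
  · subst hvs
    exact zpow_sub_le_walkCount_self_of_tau2'_lt htopo hq hr hTs1 hTs2 hT
  rw [hTrec v hvs] at hT
  obtain ⟨_, ⟨α, hα0, hα1, rfl⟩, hsup⟩ := sInf_lt_iff.1 hT
  rw [walkCount_eq_sum l l' htopo hvs, Nat.cast_sum, ← one_mul (q ^ _), ← hα1, Finset.sum_mul]
  refine Finset.sum_le_sum fun e he => ?_
  have hdst := (Finset.mem_filter.1 he).2
  rcases (hα0 e hdst).eq_or_lt with hαe | hαe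
  · rw [← hαe, zero_mul]; positivity
  have hterm := (Finset.sup_lt_iff (EReal.bot_lt_coe L)).1 hsup e he
  simp only [hαe.ne', if_false] at hterm
  split_ifs at hterm with hre
  · exact absurd hterm not_top_lt
  push Not at hre
  have hT' : T2 (src e) (q ^ ⌊(j : ℝ) + logb q (α e)⌋) (r ^ ⌊logb r (r ^ k - l e)⌋) <
      ((L - l' e : ℝ) : EReal) := by
    rw [EReal.coe_sub, EReal.lt_sub_iff_add_lt (.inl (EReal.coe_ne_bot _))
      (.inl (EReal.coe_ne_top _))]
    exact hterm
  have hsrc : (src e : ℕ) + 1 ≤ v := hdst ▸ htopo e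
  calc α e * q ^ (j - (v : ℕ))
      ≤ q ^ (⌊(j : ℝ) + logb q (α e)⌋ + 1 - (v : ℕ)) :=
        mul_zpow_sub_le_zpow_floor_add_logb hq hαe j v
    _ ≤ q ^ (⌊(j : ℝ) + logb q (α e)⌋ - (src e : ℕ)) := zpow_le_zpow_right₀ hq.le (by omega)
    _ ≤ walkCount src dst l l' s (src e) (r ^ ⌊logb r (r ^ k - l e)⌋) (L - l' e) :=
      ih (src e) (hdst ▸ htopo e) _ _ _ hT'
    _ ≤ walkCount src dst l l' s (src e) (r ^ k - l e) (L - l' e) := by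
      exact_mod_cast walkCount_mono l l' htopo s (src e) (zpow_floor_logb_le hr hre) le_rfl

theorem zpow_sub_le_walkCount_of_tau2'_le (hTs2 : ∀ a x : ℝ, 1 < a → 0 < x → T2 s a x = ⊤)
    {v : Fin n} {j k : ℤ} {L : ℝ} (hT : T2 v (q ^ j) (r ^ k) ≤ L) :
    q ^ (j - (v : ℕ)) ≤ walkCount src dst l l' s v (r ^ k) L :=
  le_walkCount_of_forall_lt l l' htopo fun _ hL =>
    zpow_sub_le_walkCount_of_tau2'_lt htopo hq hr hTs1 hTrec hTs2 v j k _
      (hT.trans_lt (EReal.coe_lt_coe hL))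

theorem tau2'_le_of_zpow_le_walkCount (hl : ∀ e, 0 ≤ l e) (v : Fin n) (j k : ℤ) (L : ℝ)
    (h : q ^ j ≤ walkCount src dst l l' s v (r ^ (k - (v : ℕ))) L) :
    T2 v (q ^ j) (r ^ k) ≤ L := by
  have hq0 : 0 < q := by linarith
  induction v using WellFoundedLT.induction generalizing j k L with
  | ind v ih =>
  by_cases hvs : v = s
  · subst hvs
    exact tau2'_self_le_of_zpow_le_walkCount htopo hq hr hTs1 h
  set B := r ^ (k - (v : ℕ))
  set N := walkCount src dst l l' s v B L
  have hN : (0 : ℝ) < N := (zpow_pos hq0 j).trans_le h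
  rw [hTrec v hvs]
  refine sInf_le_of_le ⟨fun e => walkCount src dst l l' s (src e) (B - l e) (L - l' e) / N,
    fun _ _ => by positivity, ?_, rfl⟩ (Finset.sup_le fun e he => ?_)
  · rw [← Finset.sum_div, ← Nat.cast_sum, ← walkCount_eq_sum l l' htopo hvs, div_self hN.ne']
  have hsrc : (src e : ℕ) + 1 ≤ v := (Finset.mem_filter.1 he).2 ▸ htopo e
  have hBk : B < r ^ k := zpow_lt_zpow_right₀ hr (by omega)
  dsimp only
  split_ifs with hαe hre
  · exact bot_le
  · have hM : walkCount src dst l l' s (src e) (B - l e) (L - l' e) ≠ 0 :=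
      fun h0 => hαe (by rw [h0, Nat.cast_zero, zero_div])
    have := nonneg_of_walkCount_ne_zero l l' hl hM
    linarith
  push Not at hre
  set M := walkCount src dst l l' s (src e) (B - l e) (L - l' e)
  have hαpos : 0 < (M : ℝ) / N :=
    (div_nonneg (Nat.cast_nonneg _) hN.le).lt_of_ne' hαe
  have hbudget : B - l e ≤ r ^ (⌊logb r (r ^ k - l e)⌋ - (src e : ℕ)) :=
    (zpow_sub_sub_le_zpow_floor_logb hr (hl e) hre v).trans
      (zpow_le_zpow_right₀ hr.le (by omega))
  refine EReal.add_le_of_le_sub ?_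
  rw [← EReal.coe_sub]
  refine ih (src e) ((Finset.mem_filter.1 he).2 ▸ htopo e) _ _ _ ?_
  calc q ^ ⌊(j : ℝ) + logb q ((M : ℝ) / N)⌋ ≤ M / N * q ^ j := by
        rw [floor_intCast_add_logb hq hαpos]
        exact zpow_floor_logb_le hq (mul_pos hαpos (zpow_pos hq0 j))
    _ ≤ M := by
        rw [div_mul_eq_mul_div, div_le_iff₀ hN]
        exact mul_le_mul_of_nonneg_left h (Nat.cast_nonneg _)
    _ ≤ _ := by exact_mod_cast walkCount_mono l l' htopo s (src e) hbudget le_rfl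

end Recursion

theorem stmt3
    {n : ℕ} (hn : 0 < n) {E : Type} [Fintype E]
    (src dst : E → Fin n) (l l' : E → ℝ)
    (htopo : ∀ e, src e < dst e)
    (hlnonneg : ∀ e, 0 ≤ l e)
    (ε δ : ℝ) (hε : 0 < ε) (hδ : 0 < δ)
    (q r : ℝ) (hqdef : q = (1 + ε) ^ ((1 : ℝ) / n)) (hrdef : r = (1 + δ) ^ ((1 : ℝ) / n))
    (T2 : Fin n → ℝ → ℝ → EReal)
    (hTs1 : ∀ a x : ℝ, 0 < a → a ≤ 1 → 0 < x → T2 ⟨0, hn⟩ a x = 0)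
    (hTs2 : ∀ a x : ℝ, 1 < a → 0 < x → T2 ⟨0, hn⟩ a x = ⊤)
    (hTrec : ∀ v : Fin n, v ≠ ⟨0, hn⟩ → ∀ j k : ℤ,
      T2 v (q ^ j) (r ^ k) = sInf {x : EReal |
        ∃ α : E → ℝ, (∀ e, dst e = v → 0 ≤ α e) ∧
          (∑ e ∈ Finset.univ.filter (fun e => dst e = v), α e) = 1 ∧
          x = (Finset.univ.filter (fun e => dst e = v)).sup
            (fun e =>
              if α e = 0 then (⊥ : EReal)
              else if r ^ k - l e ≤ 0 then (⊤ : EReal)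
              else T2 (src e) (q ^ ⌊(j : ℝ) + Real.logb q (α e)⌋)
                (r ^ ⌊Real.logb r (r ^ k - l e)⌋) + (l' e : EReal))})
    (L₂ : ℝ)
    (K : ℤ)
    (k : ℤ)
    (hk1 : T2 ⟨n - 1, by omega⟩ (q ^ k) (r ^ K) ≤ (L₂ : EReal))
    (hk2 : (L₂ : EReal) < T2 ⟨n - 1, by omega⟩ (q ^ (k + 1)) (r ^ K))
    (a : ℕ)
    (ha1 : tau2 src dst l l' ⟨0, hn⟩ ⟨n - 1, by omega⟩ (a : ℝ) (r ^ (K - n)) ≤ (L₂ : EReal))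
    (b : ℕ)
    (hb2 : ∀ m : ℕ, tau2 src dst l l' ⟨0, hn⟩ ⟨n - 1, by omega⟩ (m : ℝ) (r ^ K) ≤ (L₂ : EReal) →
      m ≤ b) :
    a ≤ b ∧ (a : ℝ) / q ^ k ≤ 1 + ε ∧ q ^ k / (b : ℝ) ≤ 1 + ε := by
  have hq : 1 < q := hqdef ▸ Real.one_lt_rpow (by linarith) (by positivity)
  have hr : 1 < r := hrdef ▸ Real.one_lt_rpow (by linarith) (by positivity)
  have hq0 : 0 < q := by linarith
  have hqn : q ^ (n : ℤ) = 1 + ε := by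
    rw [hqdef, one_div, zpow_natCast, Real.rpow_inv_natCast_pow (by linarith) hn.ne']
  set t : Fin n := ⟨n - 1, by omega⟩
  have ht : ((t : ℕ) : ℤ) = n - 1 := by simp only [t]; omega
  have hmono {K₁ K₂ : ℤ} (hK : K₁ ≤ K₂) : (walkCount src dst l l' ⟨0, hn⟩ t (r ^ K₁) L₂ : ℝ) ≤
      walkCount src dst l l' ⟨0, hn⟩ t (r ^ K₂) L₂ := by
    exact_mod_cast walkCount_mono l l' htopo _ _ (zpow_le_zpow_right₀ hr.le hK) le_rfl
  rw [tau2_le_iff l l' htopo] at ha1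
  have hcount_le_b : (walkCount src dst l l' ⟨0, hn⟩ t (r ^ K) L₂ : ℝ) ≤ b := by
    exact_mod_cast hb2 _ ((tau2_le_iff l l' htopo).2 le_rfl)
  have ha_lt : (a : ℝ) < q ^ (k + 1) := by
    by_contra! h
    exact hk2.not_ge (tau2'_le_of_zpow_le_walkCount htopo hq hr hTs1 hTrec hlnonneg t _ _ _
      (h.trans (ha1.trans (hmono (by omega)))))
  have hb_ge : q ^ (k - (t : ℕ)) ≤ (b : ℝ) :=
    (zpow_sub_le_walkCount_of_tau2'_le htopo hq hr hTs1 hTrec hTs2 hk1).trans hcount_le_b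
  refine ⟨by exact_mod_cast (ha1.trans (hmono (by omega))).trans hcount_le_b, ?_, ?_⟩
  · rw [div_le_iff₀ (zpow_pos hq0 k)]
    calc (a : ℝ) ≤ q ^ (k + n) := ha_lt.le.trans (zpow_le_zpow_right₀ hq.le (by omega))
      _ = (1 + ε) * q ^ k := by rw [zpow_add₀ hq0.ne', hqn, mul_comm]
  · have hb0 : (0 : ℝ) < b := (zpow_pos hq0 _).trans_le hb_ge
    rw [div_le_iff₀ hb0]
    calc q ^ k = q ^ (k - n) * (1 + ε) := by rw [← hqn, ← zpow_add₀ hq0.ne', sub_add_cancel]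
      _ ≤ b * (1 + ε) := by gcongr; exact (zpow_le_zpow_right₀ hq.le (by omega)).trans hb_ge
      _ = (1 + ε) * b := mul_comm _ _
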